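/- In the grid G = P₅ □ Pₘ (m ≥ 5) with columns V₁, …, Vₘ, every 3-percolating set S satisfies |S ∩ (Vᵢ ∪ Vᵢ₊₁)| ≥ 4 for all i with 2 ≤ i ≤ m − 1. -/

import Mathlib

open SimpleGraph

/-- The set of vertices eventually infected in `r`-neighbor bootstrap percolation
on the graph `G`, starting from the initially infected set `A`. -/
inductive Infected {V : Type*} (G : SimpleGraph V) (r : ℕ) (A : Set V) : V → Prop
  | init {v : V} : v ∈ A → Infected G r A v
  | step {v : V} (T : Finset V) : r ≤ T.card → (∀ u ∈ T, G.Adj u v) →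
      (∀ u ∈ T, Infected G r A u) → Infected G r A v

/-- `A` is an `r`-percolating set of `G`. -/
def Percolates {V : Type*} (G : SimpleGraph V) (r : ℕ) (A : Set V) : Prop :=
  ∀ v, Infected G r A v

/-- The `r`-percolation number of `G`: minimum size of an `r`-percolating set. -/
noncomputable def percNum (V : Type*) [Fintype V] (G : SimpleGraph V) (r : ℕ) : ℕ :=
  sInf {k | ∃ A : Finset V, A.card = k ∧ Percolates G r (↑A)}

/-- The `n × m` grid graph `Pₙ □ Pₘ`. -/
def gridGraph (n m : ℕ) : SimpleGraph (Fin n × Fin m) :=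
  (pathGraph n) □ (pathGraph m)

/-- A boundary vertex of a grid: degree at most 3. -/
def IsBoundary {V : Type*} (G : SimpleGraph V) (v : V) : Prop :=
  (G.neighborSet v).ncard ≤ 3

/-!
Order the vertices by infection time. A non-seed vertex of a vertex set `W` has at least `r`
earlier-infected neighbours, of which at most `k` lie outside `W` if no vertex of `W` has more
than `k` neighbours outside `W`; so it is the later endpoint of at least `r - k` edges inside `W`,
and each such edge has only one later endpoint. For two adjacent columns of `P₅ □ Pₘ` we have
`r = 3`, `k = 1` and 13 edges, so at most 6 of the 10 vertices are not seeds.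
-/

open Finset

section Percolation

variable {V : Type*} {G : SimpleGraph V} {r : ℕ}

def infectedWithin (G : SimpleGraph V) (r : ℕ) (A : Set V) : ℕ → Set V
  | 0 => A
  | n + 1 => infectedWithin G r A n ∪
      {v | ∃ T : Finset V, r ≤ #T ∧ ∀ u ∈ T, G.Adj u v ∧ u ∈ infectedWithin G r A n}

lemma monotone_infectedWithin (G : SimpleGraph V) (r : ℕ) (A : Set V) :
    Monotone (infectedWithin G r A) :=
  monotone_nat_of_le_succ fun _ => Set.subset_union_left

lemma Infected.exists_mem_infectedWithin {A : Set V} {v : V} (h : Infected G r A v) :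
    ∃ n, v ∈ infectedWithin G r A n := by
  induction h with
  | init hv => exact ⟨0, hv⟩
  | step T hcard hadj _ ih =>
    choose n hn using ih
    refine ⟨T.attach.sup (fun u => n u.1 u.2) + 1, Or.inr ⟨T, hcard, fun u hu => ⟨hadj u hu, ?_⟩⟩⟩
    exact monotone_infectedWithin G r A (le_sup (mem_attach T ⟨u, hu⟩)) (hn u hu)

lemma Percolates.exists_infectionTime {A : Set V} (h : Percolates G r A) :
    ∃ t : V → ℕ, ∀ v ∉ A, ∃ T : Finset V, r ≤ #T ∧ ∀ u ∈ T, G.Adj u v ∧ t u < t v := by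
  classical
  have hex (v : V) : ∃ n, v ∈ infectedWithin G r A n := (h v).exists_mem_infectedWithin
  refine ⟨fun v => Nat.find (hex v), fun v hv => ?_⟩
  have hmem := Nat.find_spec (hex v)
  obtain ⟨n, hn⟩ : ∃ n, Nat.find (hex v) = n + 1 :=
    Nat.exists_eq_succ_of_ne_zero fun h0 => hv (by rw [h0] at hmem; exact hmem)
  rw [hn] at hmem
  rcases hmem with hold | ⟨T, hcard, hT⟩
  · exact absurd (Nat.find_min' (hex v) hold) (by omega)
  · refine ⟨T, hcard, fun u hu => ⟨(hT u hu).1, ?_⟩⟩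
    have := Nat.find_min' (hex u) (hT u hu).2
    simp only [hn]
    omega

lemma card_sub_le_card_filter_mem [DecidableEq V] {v : V} {T W : Finset V} {k : ℕ}
    (hT : ∀ u ∈ T, G.Adj u v) (hout : (G.neighborSet v \ W).encard ≤ k) :
    #T - k ≤ #{u ∈ T | u ∈ W} := by
  have hle : #{u ∈ T | u ∉ W} ≤ k := by
    have hsub : (↑{u ∈ T | u ∉ W} : Set V) ⊆ G.neighborSet v \ W := fun u hu => by
      simp only [coe_filter, Set.mem_ofPred_eq] at hu
      exact ⟨(G.mem_neighborSet v u).2 (hT u hu.1).symm, hu.2⟩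
    exact_mod_cast (Set.encard_coe_eq_coe_finsetCard _).symm.le.trans
      ((Set.encard_le_encard hsub).trans hout)
  have := card_filter_add_card_filter_not (s := T) (· ∈ W)
  omega

lemma two_mul_card_adj_lt_le [DecidableEq V] [DecidableRel G.Adj] (W : Finset V) (t : V → ℕ) :
    2 * #{p ∈ W ×ˢ W | G.Adj p.1 p.2 ∧ t p.1 < t p.2} ≤ #{p ∈ W ×ˢ W | G.Adj p.1 p.2} := by
  set D := {p ∈ W ×ˢ W | G.Adj p.1 p.2 ∧ t p.1 < t p.2}
  have hdisj : Disjoint D (D.map (Equiv.prodComm V V).toEmbedding) := by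
    rw [Finset.disjoint_left]
    intro p hp hp'
    simp only [D, mem_map_equiv, mem_filter, Equiv.prodComm_symm, Equiv.prodComm_apply,
      Prod.fst_swap, Prod.snd_swap] at hp hp'
    omega
  have hsub : D ∪ D.map (Equiv.prodComm V V).toEmbedding ⊆ {p ∈ W ×ˢ W | G.Adj p.1 p.2} := by
    intro p hp
    simp only [D, mem_union, mem_map_equiv, mem_filter, mem_product, Equiv.prodComm_symm,
      Equiv.prodComm_apply, Prod.fst_swap, Prod.snd_swap] at hp ⊢
    rcases hp with ⟨⟨h1, h2⟩, hadj, -⟩ | ⟨⟨h1, h2⟩, hadj, -⟩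
    · exact ⟨⟨h1, h2⟩, hadj⟩
    · exact ⟨⟨h2, h1⟩, hadj.symm⟩
  have := card_le_card hsub
  rw [card_union_of_disjoint hdisj, card_map] at this
  omega

theorem Percolates.two_mul_card_sdiff_le [DecidableEq V] [DecidableRel G.Adj] {A W : Finset V}
    {k : ℕ} (h : Percolates G r ↑A) (hout : ∀ v ∈ W, (G.neighborSet v \ W).encard ≤ k) :
    2 * ((r - k) * #(W \ A)) ≤ #{p ∈ W ×ˢ W | G.Adj p.1 p.2} := by
  obtain ⟨t, ht⟩ := h.exists_infectionTime
  set D := {p ∈ W ×ˢ W | G.Adj p.1 p.2 ∧ t p.1 < t p.2}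
  have hfiber : ∀ v ∈ W \ A, r - k ≤ #{p ∈ D | p.2 = v} := by
    intro v hv
    rw [mem_sdiff] at hv
    obtain ⟨T, hcard, hT⟩ := ht v (by exact_mod_cast hv.2)
    calc r - k ≤ #T - k := by omega
      _ ≤ #{u ∈ T | u ∈ W} := card_sub_le_card_filter_mem (fun u hu => (hT u hu).1) (hout v hv.1)
      _ ≤ #{p ∈ D | p.2 = v} := by
        refine card_le_card_of_injOn (fun u => (u, v)) (fun u hu => ?_)
          (fun _ _ _ _ h => congrArg Prod.fst h)
        simp only [coe_filter, Set.mem_ofPred_eq] at hu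
        simp [D, hu.2, hv.1, hT u hu.1]
  have hD : (r - k) * #(W \ A) ≤ #D := calc
    (r - k) * #(W \ A) = ∑ _ ∈ W \ A, (r - k) := by rw [sum_const, smul_eq_mul, mul_comm]
    _ ≤ ∑ v ∈ W \ A, #{p ∈ D | p.2 = v} := sum_le_sum hfiber
    _ ≤ ∑ v ∈ W, #{p ∈ D | p.2 = v} := sum_le_sum_of_subset sdiff_subset
    _ = #D := (card_eq_sum_card_fiberwise fun p hp => (mem_product.1 (mem_filter.1 hp).1).2).symm
  exact (Nat.mul_le_mul_left 2 hD).trans (two_mul_card_adj_lt_le W t)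

end Percolation

section Grid

variable {n m : ℕ}

lemma gridGraph_adj {u v : Fin n × Fin m} :
    (gridGraph n m).Adj u v ↔
      ((u.1 : ℕ) + 1 = v.1 ∨ (v.1 : ℕ) + 1 = u.1) ∧ u.2 = v.2 ∨
      ((u.2 : ℕ) + 1 = v.2 ∨ (v.2 : ℕ) + 1 = u.2) ∧ u.1 = v.1 := by
  simp only [gridGraph, boxProd_adj, pathGraph_adj]

instance : DecidableRel (gridGraph n m).Adj := fun _ _ => decidable_of_iff _ gridGraph_adj.symm

def columnPair (n m a : ℕ) : Finset (Fin n × Fin m) :=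
  {v | (v.2 : ℕ) = a ∨ (v.2 : ℕ) = a + 1}

lemma encard_neighborSet_sdiff_columnPair_le_one {a : ℕ} (v : Fin n × Fin m)
    (hv : v ∈ columnPair n m a) :
    ((gridGraph n m).neighborSet v \ ↑(columnPair n m a)).encard ≤ 1 := by
  rw [Set.encard_le_one_iff]
  simp only [columnPair, mem_filter, coe_filter, mem_univ, true_and, Set.mem_sdiff,
    mem_neighborSet, gridGraph_adj, Set.mem_ofPred_eq, Prod.ext_iff, Fin.ext_iff] at hv ⊢
  intro x y hx hy
  omega

@[simps]
def columnPairEmbedding (n : ℕ) {a : ℕ} (ha : a + 1 < m) : Fin n × Fin 2 ↪ Fin n × Fin m where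
  toFun p := (p.1, ⟨a + p.2, by omega⟩)
  inj' p q h := by
    simp only [Prod.mk.injEq, Fin.mk.injEq, add_right_inj] at h
    exact Prod.ext h.1 (Fin.ext h.2)

lemma columnPair_eq_map {a : ℕ} (ha : a + 1 < m) :
    columnPair n m a = univ.map (columnPairEmbedding n ha) := by
  ext ⟨x, y⟩
  simp only [columnPair, mem_filter, mem_univ, true_and, mem_map, columnPairEmbedding_apply,
    Prod.mk.injEq, Prod.exists]
  constructor
  · rintro (h | h)
    · exact ⟨x, 0, rfl, Fin.ext (by simp [h])⟩
    · exact ⟨x, 1, rfl, Fin.ext (by simp [h])⟩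
  · rintro ⟨x', b, -, rfl⟩
    have := b.isLt
    simp only
    omega

lemma gridGraph_adj_columnPairEmbedding {a : ℕ} (ha : a + 1 < m) {p q : Fin n × Fin 2} :
    (gridGraph n m).Adj (columnPairEmbedding n ha p) (columnPairEmbedding n ha q) ↔
      (gridGraph n 2).Adj p q := by
  simp only [gridGraph_adj, columnPairEmbedding_apply, Fin.ext_iff]
  omega

lemma card_adj_columnPair {a : ℕ} (ha : a + 1 < m) :
    #{p ∈ columnPair 5 m a ×ˢ columnPair 5 m a | (gridGraph 5 m).Adj p.1 p.2} = 26 := by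
  rw [columnPair_eq_map ha, ← prodMap_map_product, filter_map, card_map]
  simp only [Function.comp_def, Function.Embedding.prodMap, Function.Embedding.coeFn_mk,
    Prod.map_fst, Prod.map_snd, gridGraph_adj_columnPairEmbedding]
  decide

end Grid

theorem stmt_12_general (m : ℕ) (S : Finset (Fin 5 × Fin m))
    (hperc : Percolates (gridGraph 5 m) 3 (↑S)) :
    ∀ i : ℕ, 2 ≤ i → i ≤ m - 1 →
      4 ≤ (S.filter (fun v => (v.2 : ℕ) = i - 1 ∨ (v.2 : ℕ) = i)).card := by
  intro i hi2 him
  have ha : i - 1 + 1 < m := by omega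
  have hcount := hperc.two_mul_card_sdiff_le (W := columnPair 5 m (i - 1)) (k := 1)
    encard_neighborSet_sdiff_columnPair_le_one
  have hW : #(columnPair 5 m (i - 1)) = 10 := by
    rw [columnPair_eq_map ha, card_map, card_univ]
    rfl
  have hinter : S ∩ columnPair 5 m (i - 1) =
      S.filter (fun v => (v.2 : ℕ) = i - 1 ∨ (v.2 : ℕ) = i) := by
    ext v
    simp only [columnPair, mem_inter, mem_filter, mem_univ, true_and]
    exact and_congr_right fun _ => by omega
  rw [card_adj_columnPair ha, card_sdiff, hW, hinter] at hcount
  omega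

theorem stmt_12 (m : ℕ) (hm : 5 ≤ m) (S : Finset (Fin 5 × Fin m))
    (hperc : Percolates (gridGraph 5 m) 3 (↑S)) :
    ∀ i : ℕ, 2 ≤ i → i ≤ m - 1 →
      4 ≤ (S.filter (fun v => (v.2 : ℕ) = i - 1 ∨ (v.2 : ℕ) = i)).card :=
  stmt_12_general m S hperc
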